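/- For every λ ∈ ℂ: (i) F_λ(λ, 1, 1) = 0; (ii) all three partial derivatives ∂F_λ/∂Y₀, ∂F_λ/∂Y₁, ∂F_λ/∂Y₂ vanish at the point (λ, 1, 1), so (λ:1:1) is a singular point of the sextic {F_λ = 0}; and (iii) the one-variable polynomial F_λ(Y, 1, 1) ∈ ℂ[Y] is divisible by (Y − λ)³, i.e. the line {Y₁ = Y₂} meets the sextic at (λ:1:1) with multiplicity at least 3 (a cusp with cuspidal tangent Y₁ = Y₂). -/
import Mathlib

open MvPolynomial

/-- The sextic `F_λ`, equation of the dual curve of the Hesse cubic. -/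
noncomputable def dualSextic (l : ℂ) : MvPolynomial (Fin 3) ℂ :=
  X 0 ^ 6 + X 1 ^ 6 + X 2 ^ 6
    + C (4 * l ^ 3 - 2) * (X 0 ^ 3 * X 1 ^ 3 + X 0 ^ 3 * X 2 ^ 3 + X 1 ^ 3 * X 2 ^ 3)
    - C (6 * l ^ 2) * (X 0 * X 1 * X 2 * (X 0 ^ 3 + X 1 ^ 3 + X 2 ^ 3))
    - C (3 * l * (l ^ 3 - 4)) * (X 0 ^ 2 * X 1 ^ 2 * X 2 ^ 2)

/-- `(λ:1:1)` is a cusp of the sextic `{F_λ = 0}` with cuspidal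
tangent `Y₁ = Y₂`: (i) `F_λ(λ,1,1) = 0`; (ii) all partial derivatives of `F_λ`
vanish at `(λ,1,1)`; (iii) `(Y − λ)³` divides the restriction `F_λ(Y,1,1)`. -/
theorem stmt_14 (l : ℂ) :
    eval ![l, 1, 1] (dualSextic l) = 0 ∧
    (∀ i : Fin 3, eval ![l, 1, 1] (pderiv i (dualSextic l)) = 0) ∧
    (Polynomial.X - Polynomial.C l) ^ 3 ∣
      aeval (![Polynomial.X, 1, 1] : Fin 3 → Polynomial ℂ) (dualSextic l) := by
  refine ⟨?_, ?_, ?_⟩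
  · simp [dualSextic]
    ring
  · intro i
    fin_cases i <;>
      simp [dualSextic, pderiv_X, Pi.single_apply] <;> ring
  · refine ⟨Polynomial.X ^ 3 + Polynomial.C (3 * l) * Polynomial.X ^ 2 - Polynomial.C 4, ?_⟩
    simp [dualSextic, map_ofNat]
    ring
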